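/- There cannot exist a diffeomorphism of ℝ^m sending [0,∞)^k × ℝ^{m−k} onto [0,∞)^{k'} × ℝ^{m−k'} when k ≠ k'. Consequently, each point of a submanifold with corners belongs to exactly one stratum. -/

import Mathlib

open Function

/-- The kernel of restriction to the first `k` coordinates has rank `m - k`. -/
lemma corner_ker_finrank (m k : ℕ) (hk : k ≤ m) :
    Module.finrank ℝ (LinearMap.ker (LinearMap.funLeft ℝ ℝ (Fin.castLE hk))) = m - k := by
  have hsurj : Surjective (LinearMap.funLeft ℝ ℝ (Fin.castLE hk)) :=
    LinearMap.funLeft_surjective_of_injective ℝ ℝ _ (Fin.castLE_injective hk)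
  have h := LinearMap.finrank_range_add_finrank_ker (LinearMap.funLeft ℝ ℝ (Fin.castLE hk))
  rw [LinearMap.range_eq_top.2 hsurj, finrank_top] at h
  simp only [Module.finrank_fin_fun] at h
  omega

/-- One-sided comparison: if `f` carries the corner model `ℝ^m_k` onto `ℝ^m_{k'}`,
then `k' ≤ k`. -/
lemma corner_models_le
    (m k k' : ℕ) (hk : k ≤ m) (hk' : k' ≤ m)
    (f g : EuclideanSpace ℝ (Fin m) → EuclideanSpace ℝ (Fin m))
    (hf : ContDiff ℝ (⊤ : ℕ∞) f) (hg : ContDiff ℝ (⊤ : ℕ∞) g)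
    (hgf : ∀ x, g (f x) = x) (hfg : ∀ x, f (g x) = x)
    (himg : f '' {x : EuclideanSpace ℝ (Fin m) | ∀ i : Fin m, (i : ℕ) < k → 0 ≤ x i}
          = {x : EuclideanSpace ℝ (Fin m) | ∀ i : Fin m, (i : ℕ) < k' → 0 ≤ x i}) :
    k' ≤ k := by
  classical
  set S : Set (EuclideanSpace ℝ (Fin m)) :=
    {x | ∀ i : Fin m, (i : ℕ) < k → 0 ≤ x i} with hS
  set x₀ : EuclideanSpace ℝ (Fin m) := g 0 with hx₀def
  have hfx₀ : f x₀ = 0 := hfg 0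
  -- x₀ lies in S
  have hx₀S : x₀ ∈ S := by
    have h0 : (0 : EuclideanSpace ℝ (Fin m)) ∈
        {x : EuclideanSpace ℝ (Fin m) | ∀ i : Fin m, (i : ℕ) < k' → 0 ≤ x i} := by
      intro i _; exact le_refl 0
    rw [← himg] at h0
    obtain ⟨x, hxS, hx⟩ := h0
    have : x = x₀ := by
      have := congrArg g hx
      rwa [hgf] at this
    rwa [this] at hxS
  have hfd : Differentiable ℝ f := hf.differentiable (by simp)
  set L : EuclideanSpace ℝ (Fin m) →L[ℝ] EuclideanSpace ℝ (Fin m) := fderiv ℝ f x₀ with hLdef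
  have hL : HasFDerivAt f L x₀ := (hfd x₀).hasFDerivAt
  -- L is injective
  have hLinj : Function.Injective L := by
    have hgd : HasFDerivAt g (fderiv ℝ g (f x₀)) (f x₀) :=
      ((hg.differentiable (by simp)) (f x₀)).hasFDerivAt
    have hcomp : HasFDerivAt (g ∘ f) ((fderiv ℝ g (f x₀)).comp L) x₀ := hgd.comp x₀ hL
    have hid : (g ∘ f) = id := funext hgf
    rw [hid] at hcomp
    have huniq : (fderiv ℝ g (f x₀)).comp L = ContinuousLinearMap.id ℝ _ :=
      hcomp.unique (hasFDerivAt_id x₀)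
    intro v w hvw
    have hv := congrArg (fderiv ℝ g (f x₀)) hvw
    have h1 : ((fderiv ℝ g (f x₀)).comp L) v = ((fderiv ℝ g (f x₀)).comp L) w := hv
    rw [huniq] at h1
    exact h1
  -- key derivative vanishing
  have key : ∀ v : EuclideanSpace ℝ (Fin m), (∀ i : Fin m, (i : ℕ) < k → v i = 0) →
      ∀ j : Fin m, (j : ℕ) < k' → L v j = 0 := by
    intro v hv j hj
    set ψ : ℝ → ℝ := fun t => f (x₀ + t • v) j with hψdef
    have hmem : ∀ t : ℝ, x₀ + t • v ∈ S := by
      intro t i hi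
      have : (x₀ + t • v) i = x₀ i + t * v i := rfl
      rw [this, hv i hi, mul_zero, add_zero]
      exact hx₀S i hi
    have hψnonneg : ∀ t : ℝ, 0 ≤ ψ t := by
      intro t
      have : f (x₀ + t • v) ∈ f '' S := Set.mem_image_of_mem f (hmem t)
      rw [himg] at this
      exact this j hj
    have hψ0 : ψ 0 = 0 := by
      have : x₀ + (0 : ℝ) • v = x₀ := by simp
      simp only [hψdef, this, hfx₀]
      rfl
    -- derivative of ψ at 0 is (L v) j
    have hcurve : HasDerivAt (fun t : ℝ => x₀ + t • v) v 0 := by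
      have h1 : HasDerivAt (fun t : ℝ => t • v) ((1 : ℝ) • v) 0 :=
        (hasDerivAt_id (0 : ℝ)).smul_const v
      rw [one_smul] at h1
      exact h1.const_add x₀
    have hL0 : HasFDerivAt f L (x₀ + (0 : ℝ) • v) := by simpa using hL
    have hder : HasDerivAt (fun t : ℝ => f (x₀ + t • v)) (L v) 0 :=
      hL0.comp_hasDerivAt 0 hcurve
    have hderψ : HasDerivAt ψ (L v j) 0 := by
      have h := (EuclideanSpace.proj (𝕜 := ℝ) j).hasFDerivAt.comp_hasDerivAt 0 hder
      exact h
    have hmin : IsLocalMin ψ 0 :=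
      Filter.Eventually.of_forall (fun t => by rw [hψ0]; exact hψnonneg t)
    exact hmin.hasDerivAt_eq_zero hderψ
  -- linear algebra conclusion
  set V := LinearMap.ker (LinearMap.funLeft ℝ ℝ (Fin.castLE hk))
  set W := LinearMap.ker (LinearMap.funLeft ℝ ℝ (Fin.castLE hk'))
  have hmemV : ∀ v : Fin m → ℝ, v ∈ V ↔ ∀ i : Fin m, (i : ℕ) < k → v i = 0 := by
    intro v
    constructor
    · intro hvV i hi
      have := congrFun (LinearMap.mem_ker.1 hvV) ⟨(i : ℕ), hi⟩
      simpa [LinearMap.funLeft_apply, Fin.castLE] using this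
    · intro h
      refine LinearMap.mem_ker.2 (funext fun j => ?_)
      exact h (Fin.castLE hk j) j.2
  have hmemW : ∀ v : Fin m → ℝ, v ∈ W ↔ ∀ i : Fin m, (i : ℕ) < k' → v i = 0 := by
    intro v
    constructor
    · intro hvV i hi
      have := congrFun (LinearMap.mem_ker.1 hvV) ⟨(i : ℕ), hi⟩
      simpa [LinearMap.funLeft_apply, Fin.castLE] using this
    · intro h
      refine LinearMap.mem_ker.2 (funext fun j => ?_)
      exact h (Fin.castLE hk' j) j.2
  -- the linear map L viewed on plain pi type
  let L' : (Fin m → ℝ) →ₗ[ℝ] (Fin m → ℝ) :=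
    { toFun := fun v => (L (WithLp.toLp 2 v)).ofLp
      map_add' := fun a b => by simp
      map_smul' := fun c a => by simp }
  have hmapsto : ∀ v ∈ V, L' v ∈ W := by
    intro v hvV
    rw [hmemW]
    intro i hi
    exact key (WithLp.toLp 2 v) ((hmemV v).1 hvV) i hi
  let Lres : V →ₗ[ℝ] W := L'.restrict hmapsto
  have hresinj : Function.Injective Lres := by
    intro a b hab
    have : (L' a.1) = (L' b.1) := congrArg Subtype.val hab
    exact Subtype.ext (congrArg WithLp.ofLp (hLinj (congrArg (WithLp.toLp 2) this)))
  have hle : Module.finrank ℝ V ≤ Module.finrank ℝ W :=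
    LinearMap.finrank_le_finrank_of_injective hresinj
  rw [corner_ker_finrank m k hk, corner_ker_finrank m k' hk'] at hle
  omega

/-- there is no diffeomorphism of `ℝ^m` carrying the corner model
`ℝ^m_k = [0,∞)^k × ℝ^{m−k}` onto `ℝ^m_{k'}` unless `k = k'`; consequently each point of a
submanifold with corners lies in exactly one stratum. -/
theorem corner_models_distinct
    (m k k' : ℕ) (hk : k ≤ m) (hk' : k' ≤ m)
    (f g : EuclideanSpace ℝ (Fin m) → EuclideanSpace ℝ (Fin m))
    (hf : ContDiff ℝ (⊤ : ℕ∞) f) (hg : ContDiff ℝ (⊤ : ℕ∞) g)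
    (hgf : ∀ x, g (f x) = x) (hfg : ∀ x, f (g x) = x)
    (himg : f '' {x : EuclideanSpace ℝ (Fin m) | ∀ i : Fin m, (i : ℕ) < k → 0 ≤ x i}
          = {x : EuclideanSpace ℝ (Fin m) | ∀ i : Fin m, (i : ℕ) < k' → 0 ≤ x i}) :
    k = k' := by
  have himg' : g '' {x : EuclideanSpace ℝ (Fin m) | ∀ i : Fin m, (i : ℕ) < k' → 0 ≤ x i}
      = {x : EuclideanSpace ℝ (Fin m) | ∀ i : Fin m, (i : ℕ) < k → 0 ≤ x i} := by
    rw [← himg, Set.image_image]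
    simp only [hgf, Set.image_id']
  exact le_antisymm
    (corner_models_le m k' k hk' hk g f hg hf hfg hgf himg')
    (corner_models_le m k k' hk hk' f g hf hg hgf hfg himg)
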